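/- For all real numbers z, z̃ with 0 < z ≤ z̃ and every natural number n, I_{n+1}(z)/I_n(z̃) ≤ (z/z̃)^n · (z/2), where I_m denotes the modified Bessel function of the first kind defined by its power series. -/

import Mathlib

open Real

/-- Modified Bessel function of the first kind of integer order `m`,
defined by its power series. -/
noncomputable def besselI (m : ℕ) (z : ℝ) : ℝ :=
  ∑' k : ℕ, (1 / ((Nat.factorial k : ℝ) * (Nat.factorial (m + k) : ℝ))) * (z / 2) ^ (m + 2 * k)

/-! Termwise, passing from `I_n(z̃)` to `I_{n+1}(z)` replaces `(z̃/2)^n` by `(z/2)^(n+1)`, shrinks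
`(z̃/2)^(2k)` to `(z/2)^(2k)` and enlarges `(n+k)!` to `(n+1+k)!`; the series are nonnegative,
so the comparison survives summation. -/

noncomputable def besselITerm (m : ℕ) (z : ℝ) (k : ℕ) : ℝ :=
  (1 / ((Nat.factorial k : ℝ) * (Nat.factorial (m + k) : ℝ))) * (z / 2) ^ (m + 2 * k)

theorem besselI_eq_tsum (m : ℕ) (z : ℝ) : besselI m z = ∑' k, besselITerm m z k := rfl

theorem besselITerm_nonneg (m : ℕ) {z : ℝ} (hz : 0 ≤ z) (k : ℕ) : 0 ≤ besselITerm m z k := by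
  unfold besselITerm; positivity

theorem besselITerm_le_expSeries (m : ℕ) {z : ℝ} (hz : 0 ≤ z) (k : ℕ) :
    besselITerm m z k ≤ (z / 2) ^ m * (((z / 2) ^ 2) ^ k / (Nat.factorial k : ℝ)) := by
  have hfact : (Nat.factorial k : ℝ) ≤ (Nat.factorial k : ℝ) * (Nat.factorial (m + k) : ℝ) :=
    le_mul_of_one_le_right (by positivity) (by exact_mod_cast (m + k).factorial_pos)
  calc besselITerm m z k ≤ (1 / (Nat.factorial k : ℝ)) * (z / 2) ^ (m + 2 * k) := by
        unfold besselITerm; gcongr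
    _ = (z / 2) ^ m * (((z / 2) ^ 2) ^ k / (Nat.factorial k : ℝ)) := by
        rw [pow_add, pow_mul]; ring

theorem summable_besselITerm (m : ℕ) {z : ℝ} (hz : 0 ≤ z) : Summable (besselITerm m z) :=
  .of_nonneg_of_le (besselITerm_nonneg m hz) (besselITerm_le_expSeries m hz)
    ((summable_pow_div_factorial _).mul_left _)

theorem besselI_pos (m : ℕ) {z : ℝ} (hz : 0 < z) : 0 < besselI m z := by
  rw [besselI_eq_tsum]
  refine (summable_besselITerm m hz.le).tsum_pos (besselITerm_nonneg m hz.le) 0 ?_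
  unfold besselITerm; positivity

theorem besselITerm_succ_le {z ztilde : ℝ} (hz : 0 ≤ z) (hzz : z ≤ ztilde) (hzt : ztilde ≠ 0)
    (n k : ℕ) :
    besselITerm (n + 1) z k ≤ (z / ztilde) ^ n * (z / 2) * besselITerm n ztilde k := by
  have hscale : (z / ztilde) ^ n * (z / 2) * (ztilde / 2) ^ n = (z / 2) ^ (n + 1) := by
    rw [mul_right_comm, ← mul_pow, div_mul_div_cancel₀ hzt, pow_succ]
  have hfact : (Nat.factorial (n + k) : ℝ) ≤ (Nat.factorial (n + 1 + k) : ℝ) := by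
    exact_mod_cast Nat.factorial_le (by omega)
  calc besselITerm (n + 1) z k
      = (z / 2) ^ (n + 1) * ((z / 2) ^ (2 * k) /
          ((Nat.factorial k : ℝ) * (Nat.factorial (n + 1 + k) : ℝ))) := by
        unfold besselITerm; rw [pow_add]; ring
    _ ≤ (z / 2) ^ (n + 1) * ((ztilde / 2) ^ (2 * k) /
          ((Nat.factorial k : ℝ) * (Nat.factorial (n + k) : ℝ))) := by
        have hzt₀ : 0 ≤ ztilde := hz.trans hzz
        gcongr
    _ = (z / ztilde) ^ n * (z / 2) * besselITerm n ztilde k := by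
        rw [← hscale]; unfold besselITerm; rw [pow_add]; ring

theorem besselI_succ_le_mul {z ztilde : ℝ} (hz : 0 ≤ z) (hzz : z ≤ ztilde) (hzt : ztilde ≠ 0)
    (n : ℕ) : besselI (n + 1) z ≤ (z / ztilde) ^ n * (z / 2) * besselI n ztilde := by
  rw [besselI_eq_tsum, besselI_eq_tsum, ← tsum_mul_left]
  exact (summable_besselITerm (n + 1) hz).tsum_le_tsum (besselITerm_succ_le hz hzz hzt n)
    ((summable_besselITerm n (hz.trans hzz)).mul_left _)

theorem besselI_succ_ratio_le (z ztilde : ℝ) (hz : 0 < z) (hzz : z ≤ ztilde) (n : ℕ) :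
    besselI (n + 1) z / besselI n ztilde ≤ (z / ztilde) ^ n * (z / 2) := by
  have hzt : 0 < ztilde := hz.trans_le hzz
  rw [div_le_iff₀ (besselI_pos n hzt)]
  exact besselI_succ_le_mul hz.le hzz hzt.ne' n
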